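/- arXiv:2603.01483 — 2 statements merged into one kernel-verified Lean document; each statement's English description precedes it below -/
import Mathlib

section
/- Let (x, a, p, s) ∈ ℂ⁴ and let λ₁, λ₂ ∈ ℂ with |λ₁| < 1, |λ₂| < 1 satisfy (s, ax−p) = (λ₁ + λ₂, λ₁λ₂). Then (x, a, p, s) ∈ 𝔽 if and only if (λ₁, λ₂, −p, a + x) ∈ 𝔽. -/
/-!
If `A` realises a point `(x, a, p, s)` of `𝔽`, its off-diagonal entries have sum `s` and product
`a x - det A = a x - p`, so they are `λ₁, λ₂` in some order. Multiplying `A` on the appropriate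
side by the unitary exchange matrix `!![0, 1; 1, 0]` moves them onto the diagonal, keeps the norm,
negates the determinant and turns the off-diagonal sum into `a + x`. The converse is the same
argument applied to the image point.
-/

open scoped Matrix.Norms.L2Operator

/-- The operator norm of a 2×2 complex matrix, acting on the Euclidean space ℂ². -/
noncomputable def opNorm (A : Matrix (Fin 2) (Fin 2) ℂ) : ℝ :=
  ‖LinearMap.toContinuousLinearMap (Matrix.toEuclideanLin A)‖

/-- The domain 𝔽 = {(a₁₁, a₂₂, det A, a₁₂ + a₂₁) : A ∈ M₂(ℂ), ‖A‖ < 1}. -/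
noncomputable def domF : Set (ℂ × ℂ × ℂ × ℂ) :=
  {w | ∃ A : Matrix (Fin 2) (Fin 2) ℂ, opNorm A < 1 ∧
    w = (A 0 0, A 1 1, A.det, A 0 1 + A 1 0)}

lemma eq_and_eq_or_eq_and_eq_of_add_eq_of_mul_eq {R : Type*} [CommRing R] [IsDomain R]
    {b c m n : R} (hadd : b + c = m + n) (hmul : b * c = m * n) :
    (b = m ∧ c = n) ∨ (b = n ∧ c = m) := by
  have hc : c = m + n - b := by linear_combination hadd
  have hroots : (b - m) * (b - n) = 0 := by linear_combination b * hadd - hmul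
  rcases mul_eq_zero.1 hroots with hb | hb
  · exact .inl ⟨by linear_combination hb, by linear_combination hc - hb⟩
  · exact .inr ⟨by linear_combination hb, by linear_combination hc - hb⟩

namespace Matrix

section ExchangeMatrix

variable {R : Type*}

def exchangeMatrix [Zero R] [One R] : Matrix (Fin 2) (Fin 2) R := !![0, 1; 1, 0]

lemma mul_exchangeMatrix [NonAssocSemiring R] (A : Matrix (Fin 2) (Fin 2) R) :
    A * exchangeMatrix = !![A 0 1, A 0 0; A 1 1, A 1 0] := by
  rw [exchangeMatrix, eta_fin_two A, mul_fin_two]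
  simp

lemma exchangeMatrix_mul [NonAssocSemiring R] (A : Matrix (Fin 2) (Fin 2) R) :
    exchangeMatrix * A = !![A 1 0, A 1 1; A 0 0, A 0 1] := by
  rw [exchangeMatrix, eta_fin_two A, mul_fin_two]
  simp

lemma det_exchangeMatrix [CommRing R] : (exchangeMatrix : Matrix (Fin 2) (Fin 2) R).det = -1 := by
  simp [exchangeMatrix, det_fin_two]

lemma exchangeMatrix_mem_unitary [Semiring R] [StarRing R] :
    (exchangeMatrix : Matrix (Fin 2) (Fin 2) R) ∈ unitary (Matrix (Fin 2) (Fin 2) R) := by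
  have hstar : star (exchangeMatrix : Matrix (Fin 2) (Fin 2) R) = exchangeMatrix := by
    ext i j
    fin_cases i <;> fin_cases j <;> simp [exchangeMatrix]
  have hsq : (exchangeMatrix : Matrix (Fin 2) (Fin 2) R) * exchangeMatrix = 1 := by
    rw [mul_exchangeMatrix, exchangeMatrix, one_fin_two]
    simp
  exact Unitary.mem_iff.2 ⟨by rw [hstar, hsq], by rw [hstar, hsq]⟩

end ExchangeMatrix

end Matrix

open Matrix

lemma opNorm_eq_norm (A : Matrix (Fin 2) (Fin 2) ℂ) : opNorm A = ‖A‖ := rfl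

lemma mem_domF_roots_of_mem {u v q t m₁ m₂ : ℂ} (h : (u, v, q, t) ∈ domF)
    (hadd : t = m₁ + m₂) (hmul : u * v - q = m₁ * m₂) : (m₁, m₂, -q, v + u) ∈ domF := by
  obtain ⟨A, hA, hw⟩ := h
  simp only [Prod.mk.injEq] at hw
  obtain ⟨rfl, rfl, rfl, rfl⟩ := hw
  rw [opNorm_eq_norm] at hA
  have hoffDiag : A 0 1 * A 1 0 = m₁ * m₂ := by
    rw [← hmul, det_fin_two]
    ring
  rcases eq_and_eq_or_eq_and_eq_of_add_eq_of_mul_eq hadd hoffDiag with ⟨rfl, rfl⟩ | ⟨rfl, rfl⟩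
  · refine ⟨A * exchangeMatrix, ?_, ?_⟩
    · rwa [opNorm_eq_norm, CStarRing.norm_mul_mem_unitary _ (exchangeMatrix_mem_unitary (R := ℂ))]
    · rw [det_mul, det_exchangeMatrix, mul_exchangeMatrix]
      simp [add_comm]
  · refine ⟨exchangeMatrix * A, ?_, ?_⟩
    · rwa [opNorm_eq_norm, CStarRing.norm_mem_unitary_mul _ (exchangeMatrix_mem_unitary (R := ℂ))]
    · rw [det_mul, det_exchangeMatrix, exchangeMatrix_mul]
      simp

theorem stmt2_general (x a p s l1 l2 : ℂ)
    (hs : s = l1 + l2) (hp : a * x - p = l1 * l2) :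
    (x, a, p, s) ∈ domF ↔ (l1, l2, -p, a + x) ∈ domF := by
  constructor
  · intro h
    exact mem_domF_roots_of_mem h hs (by linear_combination hp)
  · intro h
    have h' := mem_domF_roots_of_mem h (m₁ := x) (m₂ := a) (by ring) (by linear_combination -hp)
    rwa [neg_neg, add_comm, ← hs] at h'

/-- Corollary 2.3: if (s, ax−p) = (λ₁ + λ₂, λ₁λ₂) with λ₁, λ₂ ∈ 𝔻, then
(x, a, p, s) ∈ 𝔽 iff (λ₁, λ₂, −p, a + x) ∈ 𝔽. -/
theorem stmt2 (x a p s l1 l2 : ℂ)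
    (h1 : ‖l1‖ < 1) (h2 : ‖l2‖ < 1)
    (hs : s = l1 + l2) (hp : a * x - p = l1 * l2) :
    (x, a, p, s) ∈ domF ↔ (l1, l2, -p, a + x) ∈ domF :=
  stmt2_general x a p s l1 l2 hs hp
end

section
/- Let E be a proper linear subspace of M₂(ℂ) that contains all diagonal 2×2 complex matrices. Then 𝔽_{μ_E} = 𝔽 if and only if E = E_θ for some θ ∈ ℝ. -/
open scoped Classical in
/-- The structured singular value μ_E(A) relative to a structure set E ⊆ M₂(ℂ). -/
noncomputable def mu (E : Set (Matrix (Fin 2) (Fin 2) ℂ)) (A : Matrix (Fin 2) (Fin 2) ℂ) : ℝ :=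
  if ∃ X ∈ E, (1 - A * X).det = 0 then
    (sInf {r : ℝ | ∃ X ∈ E, (1 - A * X).det = 0 ∧ r = opNorm X})⁻¹
  else 0

/-- 𝔽_{μ_E} = {(a₁₁, a₂₂, det A, a₁₂ + a₂₁) : A ∈ M₂(ℂ), μ_E(A) < 1}. -/
noncomputable def Fmu (E : Set (Matrix (Fin 2) (Fin 2) ℂ)) : Set (ℂ × ℂ × ℂ × ℂ) :=
  {w | ∃ A : Matrix (Fin 2) (Fin 2) ℂ, mu E A < 1 ∧
    w = (A 0 0, A 1 1, A.det, A 0 1 + A 1 0)}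

/-- The structure E_θ = {[[z₁, w],[e^{iθ}w, z₂]] : z₁, z₂, w ∈ ℂ}. -/
def EthetaSet (θ : ℝ) : Set (Matrix (Fin 2) (Fin 2) ℂ) :=
  {M | ∃ z1 z2 w : ℂ, M = !![z1, w; Complex.exp (θ * Complex.I) * w, z2]}

/-!
If `E = E_θ` then `μ_E(A) = ‖A‖`. For any `E`, singularity of `1 - AX` forces `‖A‖ ‖X‖ ≥ 1`,
since otherwise `1 - AX` is invertible by the Neumann series. Conversely, if `‖Ax‖ = ‖A‖` with
`‖x‖ = 1`, a unitary `U ∈ E_θ` sending `Ax / ‖A‖` to `x` makes `X = U / ‖A‖` a member of `E_θ` of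
norm `‖A‖⁻¹` with `1 - AX` singular.

Now let `E` be proper and contain the diagonal matrices. Then the off-diagonal parts of its members
are pairwise proportional. Suppose that, say, `X₁₀ = c X₀₁` on `E` with `|c| < 1`, and let `A` be
the matrix unit at `(0, 1)`. Then `1 - AX` is singular only when `X₁₀ = 1`, hence `|X₀₁| = 1 / |c|`,
so `μ_E(A) ≤ |c| < 1`. But `A` maps to `(0, 0, 0, 1) ∉ 𝔽`, as any matrix mapping there has an entry
equal to `1`. So if `𝔽_{μ_E} = 𝔽`, the case `c = 0` shows that `E` has members with nonzero entries
in both off-diagonal slots, whence `X₁₀ = w X₀₁` on `E` with `|w| ≤ 1` and `|w⁻¹| ≤ 1`, that is,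
`E = E_{arg w}`.
-/

open scoped Matrix Matrix.Norms.L2Operator ComplexConjugate

section L2OpNorm

variable {𝕜 n : Type*} [RCLike 𝕜] [Fintype n] [DecidableEq n]

lemma Matrix.norm_entry_le_l2_opNorm (A : Matrix n n 𝕜) (i j : n) : ‖A i j‖ ≤ ‖A‖ :=
  calc ‖A i j‖ ≤ ‖(EuclideanSpace.equiv n 𝕜).symm (A *ᵥ (EuclideanSpace.single j 1).ofLp)‖ := by
        simpa [Matrix.mulVec_single_one] using
          PiLp.norm_apply_le ((EuclideanSpace.equiv n 𝕜).symm (A.col j)) i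
    _ ≤ ‖A‖ * ‖EuclideanSpace.single j (1 : 𝕜)‖ := A.l2_opNorm_mulVec _
    _ = ‖A‖ := by simp

lemma Matrix.one_le_l2_opNorm_mul_of_det_one_sub_mul_eq_zero {A X : Matrix n n 𝕜}
    (h : (1 - A * X).det = 0) : 1 ≤ ‖A‖ * ‖X‖ := by
  by_contra! hlt
  have hunit : IsUnit (1 - A * X) :=
    (Units.oneSub (A * X) ((A.l2_opNorm_mul X).trans_lt hlt)).isUnit
  exact ((Matrix.isUnit_iff_isUnit_det _).mp hunit).ne_zero h

end L2OpNorm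

lemma ContinuousLinearMap.exists_norm_eq_one_norm_apply_eq_opNorm {𝕜 E F : Type*} [RCLike 𝕜]
    [NormedAddCommGroup E] [NormedSpace 𝕜 E] [FiniteDimensional 𝕜 E] [Nontrivial E]
    [NormedAddCommGroup F] [NormedSpace 𝕜 F] (f : E →L[𝕜] F) :
    ∃ x, ‖x‖ = 1 ∧ ‖f x‖ = ‖f‖ := by
  have := FiniteDimensional.proper_rclike 𝕜 E
  let := NormedSpace.restrictScalars ℝ 𝕜 E
  obtain ⟨x, hx, hfx⟩ :=
    ((isCompact_sphere (0 : E) 1).image (continuous_norm.comp f.continuous)).sSup_mem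
      ((NormedSpace.sphere_nonempty.mpr zero_le_one).image _)
  exact ⟨x, mem_sphere_zero_iff_norm.mp hx, hfx.trans f.sSup_sphere_eq_norm⟩

lemma EuclideanSpace.star_dotProduct_self_of_norm_eq_one {n : Type*} [Fintype n]
    {x : EuclideanSpace ℂ n} (hx : ‖x‖ = 1) : star x.ofLp ⬝ᵥ x.ofLp = 1 := by
  rw [dotProduct_comm, ← EuclideanSpace.inner_eq_star_dotProduct, inner_self_eq_norm_sq_to_K, hx]
  simp

local notation "M₂" => Matrix (Fin 2) (Fin 2) ℂ

lemma opNorm_eq_l2_opNorm (A : M₂) : opNorm A = ‖A‖ := rfl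

section StructuredSingularValue

variable {E : Set M₂} {A : M₂}

lemma mu_zero (E : Set M₂) : mu E 0 = 0 := by
  simp [mu]

lemma mu_eq_inv_of_isLeast {m : ℝ}
    (h : IsLeast {r | ∃ X ∈ E, (1 - A * X).det = 0 ∧ r = opNorm X} m) : mu E A = m⁻¹ := by
  obtain ⟨X, hXE, hX, -⟩ := h.1
  rw [mu, if_pos ⟨X, hXE, hX⟩, h.csInf_eq]

lemma mu_le_of_forall_one_le_mul {c : ℝ} (hc : 0 ≤ c)
    (h : ∀ X ∈ E, (1 - A * X).det = 0 → 1 ≤ c * opNorm X) : mu E A ≤ c := by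
  rw [mu]
  split_ifs with hsing
  · obtain ⟨X₀, hX₀E, hX₀⟩ := hsing
    have hc0 : 0 < c := by
      rcases hc.lt_or_eq with hc0 | rfl
      · exact hc0
      · exact absurd (h X₀ hX₀E hX₀) (by simp)
    have hinf : c⁻¹ ≤ sInf {r | ∃ X ∈ E, (1 - A * X).det = 0 ∧ r = opNorm X} := by
      refine le_csInf ⟨_, X₀, hX₀E, hX₀, rfl⟩ ?_
      rintro r ⟨X, hXE, hX, rfl⟩
      rw [inv_le_iff_one_le_mul₀' hc0]
      exact h X hXE hX
    simpa using inv_anti₀ (inv_pos.mpr hc0) hinf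
  · exact hc

end StructuredSingularValue

lemma exists_mul_conj_eq_one_mul_eq (z e : ℂ) (he : e * conj e = 1) :
    ∃ μ : ℂ, μ * conj μ = 1 ∧ μ * z = e * conj z := by
  by_cases hz : z = 0
  · exact ⟨1, by simp, by simp [hz]⟩
  have hz' : conj z ≠ 0 := by simpa using hz
  refine ⟨e * conj z / z, ?_, by field_simp⟩
  simp only [map_div₀, map_mul, Complex.conj_conj]
  field_simp
  linear_combination he

lemma exists_unitary_mem_EthetaSet_mulVec_eq (θ : ℝ) {u v : Fin 2 → ℂ}
    (hu : star u ⬝ᵥ u = 1) (hv : star v ⬝ᵥ v = 1) :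
    ∃ U ∈ EthetaSet θ, U ∈ Matrix.unitaryGroup (Fin 2) ℂ ∧ U *ᵥ u = v := by
  set e := Complex.exp (θ * Complex.I)
  have he : e * conj e = 1 := by
    rw [Complex.mul_conj, Complex.normSq_eq_norm_sq, Complex.norm_exp_ofReal_mul_I]
    simp
  simp only [dotProduct, Fin.sum_univ_two, Pi.star_apply, RCLike.star_def] at hu hv
  obtain ⟨μ, hμ, hμz⟩ := exists_mul_conj_eq_one_mul_eq
    (e * conj (v 1) * u 0 - conj (v 0) * u 1) (-e) (by rw [map_neg, neg_mul_neg]; exact he)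
  simp only [map_sub, map_mul, Complex.conj_conj] at hμz
  -- `U = v u* + μ v' u'*` with `u' = (ū₁, -ū₀)`, `v' = (v̄₁, -v̄₀)`: unitary for every `|μ| = 1`,
  -- and the choice of `μ` makes `U₁₀ = e U₀₁`.
  refine ⟨!![v 0 * conj (u 0) + μ * conj (v 1) * u 1, v 0 * conj (u 1) - μ * conj (v 1) * u 0;
      v 1 * conj (u 0) - μ * conj (v 0) * u 1, v 1 * conj (u 1) + μ * conj (v 0) * u 0],
    ⟨v 0 * conj (u 0) + μ * conj (v 1) * u 1, v 1 * conj (u 1) + μ * conj (v 0) * u 0,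
      v 0 * conj (u 1) - μ * conj (v 1) * u 0, ?_⟩, ?_, ?_⟩
  · rw [show v 1 * conj (u 0) - μ * conj (v 0) * u 1
        = e * (v 0 * conj (u 1) - μ * conj (v 1) * u 0) by
      linear_combination hμz - v 1 * conj (u 0) * he]
  · rw [Matrix.mem_unitaryGroup_iff']
    set V := conj (v 0) * v 0 + conj (v 1) * v 1
    ext i j
    fin_cases i <;> fin_cases j <;>
      simp only [Fin.zero_eta, Fin.mk_one, Matrix.mul_apply, Fin.sum_univ_two, Matrix.star_apply,
        Matrix.of_apply, Matrix.cons_val', Matrix.cons_val_zero, Matrix.cons_val_one,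
        Matrix.cons_val_fin_one, RCLike.star_def, map_add, map_sub, map_mul, Complex.conj_conj,
        Matrix.one_apply_eq, Matrix.one_apply_ne, ne_eq, zero_ne_one, one_ne_zero, not_false_eq_true]
    · linear_combination V * hu + V * conj (u 1) * u 1 * hμ + hv
    · linear_combination -V * u 0 * conj (u 1) * hμ
    · linear_combination -V * u 1 * conj (u 0) * hμ
    · linear_combination V * hu + V * conj (u 0) * u 0 * hμ + hv
  · ext i
    fin_cases i <;>
      simp only [Fin.zero_eta, Fin.mk_one, Matrix.mulVec, dotProduct, Fin.sum_univ_two,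
        Matrix.of_apply, Matrix.cons_val', Matrix.cons_val_zero, Matrix.cons_val_one,
        Matrix.cons_val_fin_one]
    · linear_combination v 0 * hu
    · linear_combination v 1 * hu

lemma smul_mem_EthetaSet {θ : ℝ} (c : ℂ) {M : M₂} (hM : M ∈ EthetaSet θ) :
    c • M ∈ EthetaSet θ := by
  obtain ⟨z1, z2, w, rfl⟩ := hM
  refine ⟨c * z1, c * z2, c * w, ?_⟩
  ext i j
  fin_cases i <;> fin_cases j <;> simp [mul_left_comm]

lemma exists_mem_EthetaSet_det_one_sub_mul_eq_zero (θ : ℝ) {A : M₂} (hA : A ≠ 0) :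
    ∃ X ∈ EthetaSet θ, (1 - A * X).det = 0 ∧ ‖X‖ = ‖A‖⁻¹ := by
  obtain ⟨x, hx, hAx⟩ :=
    (Matrix.toEuclideanCLM (𝕜 := ℂ) A).exists_norm_eq_one_norm_apply_eq_opNorm
  set σ := ‖A‖
  have hσ : 0 < σ := norm_pos_iff.mpr hA
  set y := σ⁻¹ • Matrix.toEuclideanCLM (𝕜 := ℂ) A x
  have hy : ‖y‖ = 1 := by
    rw [norm_smul, hAx, Matrix.l2_opNorm_toEuclideanCLM, norm_inv, norm_norm,
      inv_mul_cancel₀ hσ.ne']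
  obtain ⟨U, hUE, hU, hUy⟩ := exists_unitary_mem_EthetaSet_mulVec_eq θ
    (EuclideanSpace.star_dotProduct_self_of_norm_eq_one hy)
    (EuclideanSpace.star_dotProduct_self_of_norm_eq_one hx)
  refine ⟨(σ⁻¹ : ℂ) • U, smul_mem_EthetaSet _ hUE, ?_, ?_⟩
  · rw [← Matrix.exists_mulVec_eq_zero_iff]
    have hAx0 : Matrix.toEuclideanCLM (𝕜 := ℂ) A x ≠ 0 :=
      norm_ne_zero_iff.mp (hAx.trans_ne hσ.ne')
    have hXAx : ((σ⁻¹ : ℂ) • U) *ᵥ (A *ᵥ x.ofLp) = x.ofLp := by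
      have hy' : y.ofLp = (σ⁻¹ : ℂ) • (A *ᵥ x.ofLp) := by
        simp [y, ← Complex.coe_smul]
      rw [Matrix.smul_mulVec, ← Matrix.mulVec_smul, ← hy', hUy]
    refine ⟨A *ᵥ x.ofLp, fun h ↦ hAx0 (WithLp.ofLp_injective 2 (by simpa using h)), ?_⟩
    rw [Matrix.sub_mulVec, Matrix.one_mulVec, ← Matrix.mulVec_mulVec, hXAx, sub_self]
  · rw [norm_smul, CStarRing.norm_of_mem_unitary hU, mul_one, norm_inv, Complex.norm_real,
      Real.norm_of_nonneg hσ.le]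

lemma mu_EthetaSet (θ : ℝ) (A : M₂) : mu (EthetaSet θ) A = opNorm A := by
  rcases eq_or_ne A 0 with rfl | hA
  · rw [mu_zero, opNorm_eq_l2_opNorm, norm_zero]
  obtain ⟨X, hXE, hX, hXnorm⟩ := exists_mem_EthetaSet_det_one_sub_mul_eq_zero θ hA
  have hleast :
      IsLeast {r | ∃ X ∈ EthetaSet θ, (1 - A * X).det = 0 ∧ r = opNorm X} ‖A‖⁻¹ := by
    refine ⟨⟨X, hXE, hX, hXnorm.symm⟩, ?_⟩
    rintro r ⟨Y, -, hY, rfl⟩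
    rw [inv_le_iff_one_le_mul₀' (norm_pos_iff.mpr hA)]
    exact Matrix.one_le_l2_opNorm_mul_of_det_one_sub_mul_eq_zero hY
  rw [mu_eq_inv_of_isLeast hleast, inv_inv, opNorm_eq_l2_opNorm]

lemma Fmu_EthetaSet (θ : ℝ) : Fmu (EthetaSet θ) = domF := by
  simp only [Fmu, domF, mu_EthetaSet]

section DiagonalSubmodule

variable {E : Submodule ℂ M₂}

lemma mem_of_offDiag_eq (hdiag : ∀ z1 z2 : ℂ, !![z1, 0; 0, z2] ∈ E) {M Y : M₂} (hY : Y ∈ E)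
    (h01 : M 0 1 = Y 0 1) (h10 : M 1 0 = Y 1 0) : M ∈ E := by
  have hM : M = !![M 0 0 - Y 0 0, 0; 0, M 1 1 - Y 1 1] + Y := by
    ext i j
    fin_cases i <;> fin_cases j <;> simp [h01, h10]
  rw [hM]
  exact E.add_mem (hdiag _ _) hY

lemma offDiag_mul_eq_of_ne_top (hE : E ≠ ⊤) (hdiag : ∀ z1 z2 : ℂ, !![z1, 0; 0, z2] ∈ E)
    {X Y : M₂} (hX : X ∈ E) (hY : Y ∈ E) : X 0 1 * Y 1 0 = X 1 0 * Y 0 1 := by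
  by_contra hd
  set d := X 0 1 * Y 1 0 - X 1 0 * Y 0 1
  have hd' : d ≠ 0 := sub_ne_zero.mpr hd
  refine hE (eq_top_iff.mpr fun M _ ↦ mem_of_offDiag_eq hdiag
    (E.add_mem (E.smul_mem ((M 0 1 * Y 1 0 - M 1 0 * Y 0 1) / d) hX)
      (E.smul_mem ((X 0 1 * M 1 0 - X 1 0 * M 0 1) / d) hY)) ?_ ?_) <;>
  · simp only [Matrix.add_apply, Matrix.smul_apply, smul_eq_mul]
    rw [div_mul_eq_mul_div, div_mul_eq_mul_div, ← add_div, eq_div_iff hd']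
    ring

end DiagonalSubmodule

lemma det_one_sub_single_mul {i j : Fin 2} (hij : i ≠ j) (X : M₂) :
    (1 - Matrix.single i j 1 * X).det = 1 - X j i := by
  fin_cases i <;> fin_cases j <;> simp [Matrix.det_fin_two, Matrix.mul_apply] at hij ⊢

lemma mu_single_lt_one {E : Set M₂} {i j : Fin 2} (hij : i ≠ j) {c : ℂ} (hc : ‖c‖ < 1)
    (h : ∀ X ∈ E, X j i = c * X i j) : mu E (Matrix.single i j 1) < 1 := by
  refine (mu_le_of_forall_one_le_mul (norm_nonneg c) fun X hXE hX ↦ ?_).trans_lt hc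
  rw [det_one_sub_single_mul hij, sub_eq_zero, h X hXE] at hX
  calc 1 = ‖c‖ * ‖X i j‖ := by rw [← norm_mul, ← hX, norm_one]
    _ ≤ ‖c‖ * opNorm X :=
      mul_le_mul_of_nonneg_left (X.norm_entry_le_l2_opNorm i j) (norm_nonneg c)

lemma zero_zero_zero_one_notMem_domF : ((0 : ℂ), (0 : ℂ), (0 : ℂ), (1 : ℂ)) ∉ domF := by
  rintro ⟨B, hB, hBeq⟩
  simp only [Prod.mk.injEq, Matrix.det_fin_two] at hBeq
  obtain ⟨h00, h11, hdet, hsum⟩ := hBeq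
  have hprod : B 0 1 * B 1 0 = 0 := by
    rw [← h00, ← h11] at hdet
    linear_combination hdet
  obtain ⟨k, l, hkl⟩ : ∃ k l, B k l = 1 := by
    rcases mul_eq_zero.mp hprod with h | h
    · exact ⟨1, 0, by linear_combination hsum.symm - h⟩
    · exact ⟨0, 1, by linear_combination hsum.symm - h⟩
  have hentry := B.norm_entry_le_l2_opNorm k l
  rw [hkl, norm_one] at hentry
  exact hB.not_ge hentry

lemma Fmu_ne_domF {E : Set M₂} {i j : Fin 2} (hij : i ≠ j) {c : ℂ} (hc : ‖c‖ < 1)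
    (h : ∀ X ∈ E, X j i = c * X i j) : Fmu E ≠ domF := by
  intro hF
  refine zero_zero_zero_one_notMem_domF
    (hF ▸ ⟨Matrix.single i j 1, mu_single_lt_one hij hc h, ?_⟩)
  fin_cases i <;> fin_cases j <;> simp [Matrix.det_fin_two] at hij ⊢

lemma exists_eq_EthetaSet_of_Fmu_eq_domF {E : Submodule ℂ M₂} (hE : E ≠ ⊤)
    (hdiag : ∀ z1 z2 : ℂ, !![z1, 0; 0, z2] ∈ E) (hF : Fmu (E : Set M₂) = domF) :
    ∃ θ : ℝ, (E : Set M₂) = EthetaSet θ := by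
  obtain ⟨Y, hYE, hY10⟩ : ∃ Y ∈ E, Y 1 0 ≠ 0 := by
    by_contra! h
    exact Fmu_ne_domF (i := 0) (j := 1) (c := 0) (by decide) (by simp) (by simpa using h) hF
  obtain ⟨Z, hZE, hZ01⟩ : ∃ Z ∈ E, Z 0 1 ≠ 0 := by
    by_contra! h
    exact Fmu_ne_domF (i := 1) (j := 0) (c := 0) (by decide) (by simp) (by simpa using h) hF
  have hY01 : Y 0 1 ≠ 0 := by
    intro h0
    have := offDiag_mul_eq_of_ne_top hE hdiag hZE hYE
    simp [h0, hZ01, hY10] at this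
  set w := Y 1 0 / Y 0 1
  have hw0 : w ≠ 0 := div_ne_zero hY10 hY01
  have hw : ∀ X ∈ E, X 1 0 = w * X 0 1 := fun X hX ↦ by
    rw [div_mul_eq_mul_div, eq_div_iff hY01]
    linear_combination -offDiag_mul_eq_of_ne_top hE hdiag hX hYE
  have hw1 : ‖w‖ = 1 := by
    refine le_antisymm (not_lt.mp fun hlt ↦ ?_) (not_lt.mp fun hlt ↦ ?_)
    · refine Fmu_ne_domF (i := 1) (j := 0) (c := w⁻¹) (by decide) ?_ (fun X hX ↦ ?_) hF
      · simpa [norm_inv] using inv_lt_one_of_one_lt₀ hlt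
      · rw [hw X hX, inv_mul_cancel_left₀ hw0]
    · exact Fmu_ne_domF (i := 0) (j := 1) (by decide) hlt hw hF
  have hexp : Complex.exp (w.arg * Complex.I) = w := by
    simpa [hw1] using Complex.norm_mul_exp_arg_mul_I w
  refine ⟨w.arg, Set.ext fun M ↦ ⟨fun hM ↦ ⟨M 0 0, M 1 1, M 0 1, ?_⟩, ?_⟩⟩
  · rw [hexp, ← hw M hM]
    exact M.eta_fin_two
  · rintro ⟨z1, z2, v, rfl⟩
    rw [hexp]
    refine mem_of_offDiag_eq hdiag (E.smul_mem (v / Y 0 1) hYE) ?_ ?_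
    · simp [hY01]
    · simp only [Matrix.of_apply, Matrix.cons_val', Matrix.cons_val_zero, Matrix.cons_val_one,
        Matrix.cons_val_fin_one, Matrix.smul_apply, smul_eq_mul, w]
      field_simp

/-- Theorem 4.3: a proper linear subspace E of M₂(ℂ) containing all diagonal matrices satisfies
𝔽_{μ_E} = 𝔽 if and only if E = E_θ for some θ ∈ ℝ. -/
theorem stmt19 (E : Submodule ℂ (Matrix (Fin 2) (Fin 2) ℂ))
    (hproper : (E : Set (Matrix (Fin 2) (Fin 2) ℂ)) ≠ Set.univ)
    (hdiag : ∀ z1 z2 : ℂ, !![z1, 0; 0, z2] ∈ E) :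
    Fmu (E : Set (Matrix (Fin 2) (Fin 2) ℂ)) = domF ↔
      ∃ θ : ℝ, (E : Set (Matrix (Fin 2) (Fin 2) ℂ)) = EthetaSet θ := by
  constructor
  · exact exists_eq_EthetaSet_of_Fmu_eq_domF (mt Submodule.coe_eq_univ.mpr hproper) hdiag
  · rintro ⟨θ, hθ⟩
    rw [hθ, Fmu_EthetaSet]
end
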